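/- Let α, β, N be real numbers and, for each integer j ≥ 0, define Z_j(s) = h_j^{−α,−β,−2−N}(−s−1). Then for every real s and every integer j ≥ 0: (s+1)(β+N−s) Z_j(s+1) + ((s+α+1)(s−N) + s(s−β−N−1)) Z_j(s) + (N+1−s)(α+s) Z_j(s−1) = (j+1)(α+β−j) Z_j(s). (This is the recurrence (relaR) for the dual Hahn recurrence coefficients a_n = n(n+α), b_n = −(n+α+1)(n−N) − n(n−β−N−1), c_n = (n−β−N−1)(n−N−1), with ε_n = (β+N−n+1)/(α+n) and eigenvalue −λ^{α,β}(−j−1), where λ^{α,β}(x) = x(x+α+β+1); the coefficients have been cleared of denominators, using ε_{n+1} a_{n+1} = (n+1)(β+N−n) and c_n/ε_n = (N+1−n)(α+n).) -/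

import Mathlib

open Polynomial Finset

noncomputable section

/-- Pochhammer symbol `(a)_k = a(a+1)⋯(a+k−1)`. -/
def poch (a : ℝ) (k : ℕ) : ℝ := ∏ i ∈ Finset.range k, (a + i)

/-- The quadratic lattice `λ^{α,β}(x) = x(x+α+β+1)`. -/
def lam (α β x : ℝ) : ℝ := x * (x + α + β + 1)

/-- The dual Hahn polynomial `R_n^{α,β,N}`. -/
def dualHahn (α β N : ℝ) (n : ℕ) : Polynomial ℝ :=
  Polynomial.C ((n.factorial : ℝ))⁻¹ *
    ∑ j ∈ Finset.range (n + 1),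
      Polynomial.C ((-1 : ℝ) ^ j * poch (-(n : ℝ)) j * poch (-N + j) (n - j)
          / (poch (α + 1) j * (j.factorial : ℝ))) *
        ∏ i ∈ Finset.range j, (Polynomial.X - Polynomial.C ((i : ℝ) * (α + β + 1 + i)))

/-- Dual Hahn polynomial with integer index; `R_k = 0` for `k < 0`. -/
def dualHahnZ (α β N : ℝ) (k : ℤ) : Polynomial ℝ :=
  if 0 ≤ k then dualHahn α β N k.toNat else 0

/-- The Hahn polynomial `h_n^{α,β,N}` evaluated at `x`. -/
def hahn (α β N : ℝ) (n : ℕ) (x : ℝ) : ℝ :=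
  ∑ j ∈ Finset.range (n + 1),
    poch (-(n : ℝ)) j * poch ((n : ℝ) + α + β + 1) j * poch (-N + j) (n - j) *
      poch (α + j + 1) (n - j) * poch (-x) j / (j.factorial : ℝ)

/-- The dual Hahn weight `w_{*;α,β,N}(x)`. -/
def dualHahnWeight (α β : ℝ) (N : ℕ) (x : ℕ) : ℝ :=
  (2 * (x : ℝ) + α + β + 1) * poch (α + 1) x * poch (-(N : ℝ)) x * (N.factorial : ℝ) /
    ((-1 : ℝ) ^ x * poch ((x : ℝ) + α + β + 1) (N + 1) * poch (β + 1) x * (x.factorial : ℝ))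

/-!
Write `Z_j(s) = ∑_{k ≤ j} C_k (s+1)_k`. The operator `L` on the left-hand side is lower
bidiagonal on the basis `(s+1)_k`: `L (s+1)_k = μ_k (s+1)_k + ν_k (s+1)_{k-1}` with
`μ_k = (k+1)(α+β-k)` and `ν_k = k(k+N+1)(k-α)`. The coefficients of `Z_j` obey the
hypergeometric two-term ratio `C_{k+1} ν_{k+1} = (μ_j - μ_k) C_k`, so in `L Z_j - μ_j Z_j` the
contributions of consecutive basis vectors cancel.
-/

lemma poch_zero (a : ℝ) : poch a 0 = 1 := by simp [poch]

lemma poch_succ (a : ℝ) (k : ℕ) : poch a (k + 1) = poch a k * (a + k) := by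
  simp [poch, Finset.prod_range_succ]

lemma poch_succ' (a : ℝ) (k : ℕ) : poch a (k + 1) = a * poch (a + 1) k := by
  rw [poch, Finset.prod_range_succ', poch, mul_comm]
  push_cast
  simp only [add_zero, add_assoc, add_comm (1 : ℝ)]

lemma sum_mul_eq_eigenvalue_mul_of_bidiagonal {R : Type*} [CommRing R]
    (φ ψ μ ν c : ℕ → R) (n : ℕ) (h0 : ψ 0 = μ 0 * φ 0)
    (hsucc : ∀ k, ψ (k + 1) = μ (k + 1) * φ (k + 1) + ν (k + 1) * φ k)
    (hc : ∀ k < n, c (k + 1) * ν (k + 1) = (μ n - μ k) * c k) :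
    ∑ k ∈ range (n + 1), c k * ψ k = μ n * ∑ k ∈ range (n + 1), c k * φ k := by
  have hoff : ∑ k ∈ range n, c (k + 1) * (ν (k + 1) * φ k) =
      ∑ k ∈ range n, (μ n - μ k) * c k * φ k :=
    sum_congr rfl fun k hk => by rw [← mul_assoc, hc k (mem_range.mp hk)]
  calc ∑ k ∈ range (n + 1), c k * ψ k
      = ∑ k ∈ range (n + 1), c k * μ k * φ k + ∑ k ∈ range n, (μ n - μ k) * c k * φ k := by
        simp only [sum_range_succ' _ n, h0, hsucc, mul_add, sum_add_distrib, hoff, mul_assoc]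
        ring
    _ = μ n * ∑ k ∈ range (n + 1), c k * φ k := by
        rw [sum_range_succ, sum_range_succ, add_right_comm, ← sum_add_distrib, mul_add, mul_sum]
        congr 1
        · exact sum_congr rfl fun k _ => by ring
        · ring

def hahnCoeff (α β N : ℝ) (n k : ℕ) : ℝ :=
  poch (-(n : ℝ)) k * poch ((n : ℝ) + α + β + 1) k * poch (-N + k) (n - k) *
    poch (α + k + 1) (n - k) / (k.factorial : ℝ)

lemma hahn_eq_sum (α β N : ℝ) (n : ℕ) (x : ℝ) :
    hahn α β N n x = ∑ k ∈ range (n + 1), hahnCoeff α β N n k * poch (-x) k :=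
  sum_congr rfl fun k _ => by rw [hahnCoeff, div_mul_eq_mul_div]

/-- Stated without division since `-N + k` and `α + k + 1` may vanish. -/
lemma hahnCoeff_succ_mul (α β N : ℝ) {n k : ℕ} (hk : k < n) :
    hahnCoeff α β N n (k + 1) * ((k + 1) * (-N + k) * (α + k + 1)) =
      hahnCoeff α β N n k * ((-n + k) * (n + α + β + 1 + k)) := by
  obtain ⟨m, hm⟩ : ∃ m, n - k = m + 1 := ⟨n - k - 1, by omega⟩
  have hnk : n - (k + 1) = m := by omega
  rw [hahnCoeff, hahnCoeff, hm, hnk, poch_succ' (-N + k), poch_succ' (α + k + 1),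
    poch_succ (-(n : ℝ)), poch_succ ((n : ℝ) + α + β + 1), Nat.factorial_succ]
  push_cast [add_assoc]
  field_simp

/-- The recurrence (relaR) of the dual Hahn coefficients with denominators cleared, as an
operator in `s`. -/
def hahnRecOp (α β N : ℝ) (f : ℝ → ℝ) (s : ℝ) : ℝ :=
  (s + 1) * (β + N - s) * f (s + 1) + ((s + α + 1) * (s - N) + s * (s - β - N - 1)) * f s +
    (N + 1 - s) * (α + s) * f (s - 1)

section hahnRecOp

variable (α β N : ℝ)

lemma hahnRecOp_sum (n : ℕ) (c : ℕ → ℝ) (g : ℕ → ℝ → ℝ) (s : ℝ) :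
    hahnRecOp α β N (fun t => ∑ k ∈ range n, c k * g k t) s =
      ∑ k ∈ range n, c k * hahnRecOp α β N (g k) s := by
  simp only [hahnRecOp, mul_sum, ← sum_add_distrib]
  exact sum_congr rfl fun k _ => by ring

lemma hahnRecOp_poch_zero (s : ℝ) :
    hahnRecOp α β N (fun t => poch (t + 1) 0) s = (α + β) * poch (s + 1) 0 := by
  simp only [hahnRecOp, poch_zero]
  ring

lemma hahnRecOp_poch_succ (k : ℕ) (s : ℝ) :
    hahnRecOp α β N (fun t => poch (t + 1) (k + 1)) s =
      (k + 2) * (α + β - (k + 1)) * poch (s + 1) (k + 1) +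
        (k + 1) * (N + 2 + k) * (k + 1 - α) * poch (s + 1) k := by
  -- `(s+1)(s+2)_{k+1} = (s+1)_{k+2}` and `(s)_{k+1} = s (s+1)_k` put every term on `(s+1)_k`.
  have hup : (s + 1) * poch (s + 1 + 1) (k + 1) = poch (s + 1) k * (s + 1 + k) * (s + 2 + k) := by
    rw [← poch_succ', poch_succ, poch_succ]
    push_cast
    ring
  have hdown : poch (s - 1 + 1) (k + 1) = s * poch (s + 1) k := by
    rw [poch_succ', sub_add_cancel]
  simp only [hahnRecOp, hdown, poch_succ (s + 1) k]
  linear_combination (β + N - s) * hup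

end hahnRecOp

/-- The Hahn polynomials `Z_j(s) = h_j^{−α,−β,−2−N}(−s−1)` satisfy the recurrence (relaR)
for the dual Hahn recurrence coefficients with `ε_n = (β+N−n+1)/(α+n)` and eigenvalue
`−λ^{α,β}(−j−1)`, with denominators cleared. -/
theorem hahn_rec_two (α β N : ℝ) (j : ℕ) (s : ℝ) :
    (s + 1) * (β + N - s) * hahn (-α) (-β) (-2 - N) j (-(s + 1) - 1) +
      ((s + α + 1) * (s - N) + s * (s - β - N - 1)) * hahn (-α) (-β) (-2 - N) j (-s - 1) +
      (N + 1 - s) * (α + s) * hahn (-α) (-β) (-2 - N) j (-(s - 1) - 1) =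
    (j + 1) * (α + β - j) * hahn (-α) (-β) (-2 - N) j (-s - 1) := by
  have hZ : (fun t => hahn (-α) (-β) (-2 - N) j (-t - 1)) =
      fun t => ∑ k ∈ range (j + 1), hahnCoeff (-α) (-β) (-2 - N) j k * poch (t + 1) k := by
    funext t
    simp only [hahn_eq_sum, neg_sub, sub_neg_eq_add, add_comm (1 : ℝ)]
  change hahnRecOp α β N (fun t => hahn (-α) (-β) (-2 - N) j (-t - 1)) s =
    _ * (fun t => hahn (-α) (-β) (-2 - N) j (-t - 1)) s
  rw [hZ, hahnRecOp_sum]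
  refine sum_mul_eq_eigenvalue_mul_of_bidiagonal (fun k => poch (s + 1) k) _
    (fun k : ℕ => ((k : ℝ) + 1) * (α + β - k)) (fun k : ℕ => k * (N + 1 + k) * (k - α)) _ j
    ?_ ?_ ?_
  · simpa using hahnRecOp_poch_zero α β N s
  · intro k
    rw [hahnRecOp_poch_succ]
    push_cast
    ring
  · intro k hk
    push_cast
    linear_combination hahnCoeff_succ_mul (-α) (-β) (-2 - N) hk
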